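/- Trajectory importance sampling is unbiased for off-policy evaluation: in an episodic finite-horizon MDP with finite state type S, finite nonempty action type A, horizon H, transition kernels P, and rewards r, let π (the target policy) and μ (the behavior policy) be Markov randomized policies such that for every stage t, state s, and action a, (π t s) a > 0 implies (μ t s) a > 0. Then for every start state s, the expectation, under the trajectory distribution of μ started from s, of W · G — where W = ∏_{t=0}^{H-1} (π t s_t) a_t / (μ t s_t) a_t is the cumulative importance weight and G = ∑_{t=0}^{H-1} r t s_t a_t is the observed return — equals V^π_0(s), the value of the target policy. -/

import Mathlib

open scoped BigOperators

noncomputable section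

/-- Expectation of a real-valued function under a probability mass function. -/
noncomputable def pexp {α : Type} (p : PMF α) (f : α → ℝ) : ℝ :=
  ∑' a, (p a).toReal * f a

variable {S A : Type} [Fintype S] [Nonempty S] [Fintype A] [Nonempty A] {H : ℕ}

/-- Trajectory distribution of an episodic MDP: `traj P π n h s` is the
distribution over the list of (state, action) pairs produced over the next
`n` stages, starting at stage `h` in state `s`, when at each stage `t` the
action is sampled from `π t s_t` and the next state from `P t s_t a_t`. -/
noncomputable def traj (P : Fin H → S → A → PMF S) (π : Fin H → S → PMF A) :
    ℕ → ℕ → S → PMF (List (S × A))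
  | 0, _, _ => PMF.pure []
  | n + 1, h, s =>
    if hlt : h < H then
      (π ⟨h, hlt⟩ s).bind fun a =>
        (P ⟨h, hlt⟩ s a).bind fun s' =>
          (traj P π n (h + 1) s').map fun l => (s, a) :: l
    else PMF.pure []

/-- Cumulative reward `∑_{t=h}^{H-1} r t s_t a_t` of a trajectory whose first
entry corresponds to stage `h`. -/
noncomputable def cumReward (r : Fin H → S → A → ℝ) (h : ℕ)
    (l : List (S × A)) : ℝ :=
  ((l.zipIdx.map Prod.swap).map fun p =>
    if hlt : h + p.1 < H then r ⟨h + p.1, hlt⟩ p.2.1 p.2.2 else 0).sum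

/-- Value `V^π_h(s)`: the trajectory expectation of the cumulative reward
from stage `h` onward, started at `s_h = s`. -/
noncomputable def value (P : Fin H → S → A → PMF S) (r : Fin H → S → A → ℝ)
    (π : Fin H → S → PMF A) (h : ℕ) (s : S) : ℝ :=
  pexp (traj P π (H - h) h s) (cumReward r h)

end

/-- Cumulative importance weight `∏_{t=0}^{H-1} π(a_t | s_t) / μ(a_t | s_t)`
of a trajectory whose first entry corresponds to stage `0`. -/
noncomputable def impWeight {S A : Type} {H : ℕ} (π μ : Fin H → S → PMF A)
    (l : List (S × A)) : ℝ :=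
  ((l.zipIdx.map Prod.swap).map fun p =>
    if hlt : p.1 < H then
      ((π ⟨p.1, hlt⟩ p.2.1) p.2.2).toReal / ((μ ⟨p.1, hlt⟩ p.2.1) p.2.2).toReal
    else 1).prod

section PexpAux

lemma pexp_pure {α : Type} (a : α) (f : α → ℝ) : pexp (PMF.pure a) f = f a := by
  classical
  unfold pexp
  have h : ∀ b, ((PMF.pure a) b).toReal * f b = if b = a then f a else 0 := by
    intro b
    by_cases hb : b = a <;> simp [PMF.pure_apply, hb]
  simp_rw [h]
  exact tsum_ite_eq a (fun _ => f a)

lemma pexp_sum_of_support {α : Type} (p : PMF α) {t : Finset α}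
    (h : p.support ⊆ ↑t) (f : α → ℝ) :
    pexp p f = ∑ a ∈ t, (p a).toReal * f a := by
  refine tsum_eq_sum fun b hb => ?_
  have hz : p b = 0 := by
    by_contra hb'
    exact hb (h ((PMF.mem_support_iff p b).mpr hb'))
  simp [hz]

lemma sum_toReal_one {α : Type} [Fintype α] (p : PMF α) :
    ∑ a : α, (p a).toReal = 1 := by
  rw [← tsum_fintype (L := .unconditional _), ← ENNReal.tsum_toReal_eq (fun a => p.apply_ne_top a),
    PMF.tsum_coe, ENNReal.toReal_one]

lemma pexp_one {α : Type} (p : PMF α) : pexp p (fun _ => 1) = 1 := by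
  unfold pexp
  simp_rw [mul_one]
  rw [← ENNReal.tsum_toReal_eq (fun a => p.apply_ne_top a), PMF.tsum_coe,
    ENNReal.toReal_one]

lemma pexp_mul_left {α : Type} (p : PMF α) (c : ℝ) (f : α → ℝ) :
    pexp p (fun a => c * f a) = c * pexp p f := by
  unfold pexp
  simp_rw [mul_left_comm _ c]
  exact tsum_mul_left

lemma pexp_const {α : Type} (p : PMF α) (c : ℝ) :
    pexp p (fun _ => c) = c := by
  have h := pexp_mul_left p c (fun _ => 1)
  simpa [pexp_one p] using h

lemma pexp_add {α : Type} (p : PMF α) (hp : p.support.Finite) (f g : α → ℝ) :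
    pexp p (fun a => f a + g a) = pexp p f + pexp p g := by
  classical
  have hsub : p.support ⊆ ↑hp.toFinset := by simp
  rw [pexp_sum_of_support p hsub, pexp_sum_of_support p hsub,
    pexp_sum_of_support p hsub, ← Finset.sum_add_distrib]
  exact Finset.sum_congr rfl fun a _ => by ring

lemma pexp_bind_fin {α β : Type} [Fintype α] (p : PMF α) (q : α → PMF β)
    (hq : ∀ a, (q a).support.Finite) (f : β → ℝ) :
    pexp (p.bind q) f = ∑ a : α, (p a).toReal * pexp (q a) f := by
  classical
  set t : Finset β := Finset.univ.biUnion fun a => (hq a).toFinset with ht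
  have hsubq : ∀ a, (q a).support ⊆ ↑t := by
    intro a b hb
    exact Finset.mem_coe.mpr (Finset.mem_biUnion.mpr
      ⟨a, Finset.mem_univ a, (hq a).mem_toFinset.mpr hb⟩)
  have hsub : (p.bind q).support ⊆ ↑t := by
    rw [PMF.support_bind]
    intro b hb
    obtain ⟨a, -, hb⟩ := Set.mem_iUnion₂.mp hb
    exact hsubq a hb
  have happ : ∀ b, ((p.bind q) b).toReal
      = ∑ a : α, (p a).toReal * ((q a) b).toReal := by
    intro b
    rw [PMF.bind_apply, tsum_fintype,
      ENNReal.toReal_sum (fun a _ => ENNReal.mul_ne_top (p.apply_ne_top a)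
        ((q a).apply_ne_top b))]
    simp [ENNReal.toReal_mul]
  rw [pexp_sum_of_support (p.bind q) hsub f]
  simp_rw [happ, Finset.sum_mul]
  rw [Finset.sum_comm]
  refine Finset.sum_congr rfl fun a _ => ?_
  rw [pexp_sum_of_support (q a) (hsubq a) f, Finset.mul_sum]
  exact Finset.sum_congr rfl fun b _ => by ring

lemma pexp_map_inj {α β : Type} (p : PMF α) (e : α → β)
    (he : Function.Injective e) (f : β → ℝ) :
    pexp (p.map e) f = pexp p (fun a => f (e a)) := by
  unfold pexp
  have hrange : Function.support (fun b => ((p.map e) b).toReal * f b)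
      ⊆ Set.range e := by
    intro b hb
    by_contra hb'
    apply hb
    have hz : (p.map e) b = 0 := by
      rw [PMF.map_apply]
      rw [ENNReal.tsum_eq_zero]
      intro a
      have : b ≠ e a := fun hba => hb' ⟨a, hba.symm⟩
      simp [this]
    simp [hz]
  rw [← he.tsum_eq hrange]
  refine tsum_congr fun a => ?_
  have hma : (p.map e) (e a) = p a := by
    rw [PMF.map_apply]
    rw [tsum_eq_single a (fun a' ha' => by
      have : e a ≠ e a' := fun h => ha' (he h.symm)
      simp [this])]
    simp
  rw [hma]

end PexpAux


section ISProof

open Function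

variable {S A : Type} [Fintype S] [Nonempty S] [Fintype A] [Nonempty A] {H : ℕ}

/-- shifted importance weight, starting at stage `h` -/
noncomputable def wgt (π μ : Fin H → S → PMF A) (h : ℕ) (l : List (S × A)) : ℝ :=
  ((l.zipIdx.map Prod.swap).map fun p =>
    if hlt : h + p.1 < H then
      ((π ⟨h + p.1, hlt⟩ p.2.1) p.2.2).toReal /
        ((μ ⟨h + p.1, hlt⟩ p.2.1) p.2.2).toReal
    else 1).prod

lemma wgt_zero (π μ : Fin H → S → PMF A) (l : List (S × A)) :
    wgt π μ 0 l = impWeight π μ l := by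
  simp [wgt, impWeight, Nat.zero_add]

lemma enumFrom_succ_map {α β : Type} (l : List α) :
    ∀ (k : ℕ) (F : ℕ × α → β),
      ((l.zipIdx (k + 1)).map Prod.swap).map F
        = ((l.zipIdx k).map Prod.swap).map fun p => F (p.1 + 1, p.2) := by
  induction l with
  | nil => intro k F; simp
  | cons x xs ih =>
    intro k F
    simp only [List.zipIdx_cons, List.map_cons]
    rw [ih (k + 1) F]
    rfl

lemma wgt_nil (π μ : Fin H → S → PMF A) (h : ℕ) : wgt π μ h [] = 1 := by
  simp [wgt]

lemma cumReward_nil (r : Fin H → S → A → ℝ) (h : ℕ) : cumReward r h [] = 0 := by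
  simp [cumReward]

lemma wgt_cons (π μ : Fin H → S → PMF A) (h : ℕ) (x : S × A) (l : List (S × A)) :
    wgt π μ h (x :: l)
      = (if hlt : h < H then
          ((π ⟨h, hlt⟩ x.1) x.2).toReal / ((μ ⟨h, hlt⟩ x.1) x.2).toReal
        else 1) * wgt π μ (h + 1) l := by
  unfold wgt
  rw [List.zipIdx_cons, List.map_cons, List.map_cons, List.prod_cons]
  congr 1
  rw [show (1 : ℕ) = 0 + 1 from rfl, enumFrom_succ_map]
  show (List.map _ (List.map Prod.swap l.zipIdx)).prod = _
  congr 1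
  refine List.map_congr_left fun p _ => ?_
  simp only [Nat.add_succ, Nat.succ_add]

lemma cumReward_cons (r : Fin H → S → A → ℝ) (h : ℕ) (x : S × A)
    (l : List (S × A)) :
    cumReward r h (x :: l)
      = (if hlt : h < H then r ⟨h, hlt⟩ x.1 x.2 else 0)
        + cumReward r (h + 1) l := by
  unfold cumReward
  rw [List.zipIdx_cons, List.map_cons, List.map_cons, List.sum_cons]
  congr 1
  rw [show (1 : ℕ) = 0 + 1 from rfl, enumFrom_succ_map]
  show (List.map _ (List.map Prod.swap l.zipIdx)).sum = _
  congr 1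
  refine List.map_congr_left fun p _ => ?_
  simp only [Nat.add_succ, Nat.succ_add]

lemma traj_support_finite (P : Fin H → S → A → PMF S) (ρ : Fin H → S → PMF A) :
    ∀ (n h : ℕ) (s : S), (traj P ρ n h s).support.Finite := by
  intro n
  induction n with
  | zero => intro h s; simp [traj]
  | succ n ih =>
    intro h s
    by_cases hlt : h < H
    · rw [traj, dif_pos hlt, PMF.support_bind]
      refine Set.Finite.biUnion (Set.toFinite _) fun a _ => ?_
      rw [PMF.support_bind]
      refine Set.Finite.biUnion (Set.toFinite _) fun s' _ => ?_
      rw [PMF.support_map]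
      exact (ih (h + 1) s').image _
    · rw [traj, dif_neg hlt]; simp

lemma pexp_traj_succ (P : Fin H → S → A → PMF S) (ρ : Fin H → S → PMF A)
    {n h : ℕ} (hlt : h < H) (s : S) (f : List (S × A) → ℝ) :
    pexp (traj P ρ (n + 1) h s) f
      = ∑ a : A, ((ρ ⟨h, hlt⟩ s) a).toReal *
          ∑ s' : S, ((P ⟨h, hlt⟩ s a) s').toReal *
            pexp (traj P ρ n (h + 1) s') (fun l => f ((s, a) :: l)) := by
  rw [traj, dif_pos hlt]
  rw [pexp_bind_fin _ _ (fun a => by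
    rw [PMF.support_bind]
    refine Set.Finite.biUnion (Set.toFinite _) fun s' _ => ?_
    rw [PMF.support_map]
    exact (traj_support_finite P ρ n (h + 1) s').image _)]
  refine Finset.sum_congr rfl fun a _ => ?_
  congr 1
  rw [pexp_bind_fin _ _ (fun s' => by
    rw [PMF.support_map]
    exact (traj_support_finite P ρ n (h + 1) s').image _)]
  refine Finset.sum_congr rfl fun s' _ => ?_
  congr 1
  exact pexp_map_inj _ _ (fun l₁ l₂ hl => by simpa using hl) f

lemma pexp_traj_zero (P : Fin H → S → A → PMF S) (ρ : Fin H → S → PMF A)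
    (h : ℕ) (s : S) (f : List (S × A) → ℝ) :
    pexp (traj P ρ 0 h s) f = f [] := by
  rw [traj]; exact pexp_pure _ _

lemma pexp_traj_stop (P : Fin H → S → A → PMF S) (ρ : Fin H → S → PMF A)
    {n h : ℕ} (hge : ¬ h < H) (s : S) (f : List (S × A) → ℝ) :
    pexp (traj P ρ (n + 1) h s) f = f [] := by
  rw [traj, dif_neg hge]; exact pexp_pure _ _

variable (P : Fin H → S → A → PMF S) (r : Fin H → S → A → ℝ)
  (π μ : Fin H → S → PMF A)
  (habs : ∀ (t : Fin H) (s : S) (a : A), 0 < (π t s) a → 0 < (μ t s) a)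

include habs in
lemma mu_mul_ratio (t : Fin H) (s : S) (a : A) :
    ((μ t s) a).toReal * (((π t s) a).toReal / ((μ t s) a).toReal)
      = ((π t s) a).toReal := by
  by_cases hμ : (μ t s) a = 0
  · have hπ : (π t s) a = 0 := by
      by_contra hπ
      exact absurd (habs t s a (pos_iff_ne_zero.mpr hπ)) (by simp [hμ])
    simp [hμ, hπ]
  · have hne : ((μ t s) a).toReal ≠ 0 :=
      ENNReal.toReal_ne_zero.mpr ⟨hμ, PMF.apply_ne_top _ _⟩
    rw [mul_comm, div_mul_cancel₀ _ hne]

include habs in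
lemma wgt_exp : ∀ (n h : ℕ) (s : S),
    pexp (traj P μ n h s) (wgt π μ h) = 1 := by
  intro n
  induction n with
  | zero => intro h s; rw [pexp_traj_zero, wgt_nil]
  | succ n ih =>
    intro h s
    by_cases hlt : h < H
    · rw [pexp_traj_succ P μ hlt]
      have hstep : ∀ (a : A) (s' : S),
          pexp (traj P μ n (h + 1) s') (fun l => wgt π μ h ((s, a) :: l))
            = ((π ⟨h, hlt⟩ s) a).toReal / ((μ ⟨h, hlt⟩ s) a).toReal := by
        intro a s'
        have hf : (fun l => wgt π μ h ((s, a) :: l))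
            = fun l => (((π ⟨h, hlt⟩ s) a).toReal / ((μ ⟨h, hlt⟩ s) a).toReal)
                * wgt π μ (h + 1) l := by
          funext l
          rw [wgt_cons, dif_pos hlt]
        rw [hf, pexp_mul_left, ih (h + 1) s', mul_one]
      simp_rw [hstep]
      have hsum : ∀ a : A, ∑ s' : S, ((P ⟨h, hlt⟩ s a) s').toReal *
          (((π ⟨h, hlt⟩ s) a).toReal / ((μ ⟨h, hlt⟩ s) a).toReal)
            = ((π ⟨h, hlt⟩ s) a).toReal / ((μ ⟨h, hlt⟩ s) a).toReal := by
        intro a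
        rw [← Finset.sum_mul, sum_toReal_one, one_mul]
      simp_rw [hsum]
      simp_rw [mu_mul_ratio π μ habs]
      exact sum_toReal_one _
    · rw [pexp_traj_stop P μ hlt, wgt_nil]

include habs in
lemma is_unbiased_aux : ∀ (n h : ℕ) (s : S),
    pexp (traj P μ n h s) (fun l => wgt π μ h l * cumReward r h l)
      = pexp (traj P π n h s) (cumReward r h) := by
  intro n
  induction n with
  | zero =>
    intro h s
    rw [pexp_traj_zero, pexp_traj_zero, cumReward_nil, mul_zero]
  | succ n ih =>
    intro h s
    by_cases hlt : h < H
    · rw [pexp_traj_succ P μ hlt, pexp_traj_succ P π hlt]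
      refine Finset.sum_congr rfl fun a _ => ?_
      set ratio : ℝ :=
        ((π ⟨h, hlt⟩ s) a).toReal / ((μ ⟨h, hlt⟩ s) a).toReal with hratio
      set rr : ℝ := r ⟨h, hlt⟩ s a with hrr
      have hVπ : ∀ s' : S,
          pexp (traj P π n (h + 1) s') (fun l => cumReward r h ((s, a) :: l))
            = rr + pexp (traj P π n (h + 1) s') (cumReward r (h + 1)) := by
        intro s'
        have hf : (fun l => cumReward r h ((s, a) :: l))
            = fun l => rr + cumReward r (h + 1) l := by
          funext l; rw [cumReward_cons, dif_pos hlt]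
        rw [hf, pexp_add _ (traj_support_finite P π n (h + 1) s'),
          pexp_const]
      have hVμ : ∀ s' : S,
          pexp (traj P μ n (h + 1) s')
              (fun l => wgt π μ h ((s, a) :: l) * cumReward r h ((s, a) :: l))
            = ratio *
              (rr + pexp (traj P π n (h + 1) s') (cumReward r (h + 1))) := by
        intro s'
        have hf : (fun l => wgt π μ h ((s, a) :: l) * cumReward r h ((s, a) :: l))
            = fun l => ratio * (rr * wgt π μ (h + 1) l
                + wgt π μ (h + 1) l * cumReward r (h + 1) l) := by
          funext l
          rw [wgt_cons, dif_pos hlt, cumReward_cons, dif_pos hlt]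
          ring
        rw [hf, pexp_mul_left,
          pexp_add _ (traj_support_finite P μ n (h + 1) s'),
          pexp_mul_left, wgt_exp P π μ habs n (h + 1) s', mul_one,
          ih (h + 1) s']
      simp_rw [hVμ, hVπ]
      have hpull : ∑ s' : S, ((P ⟨h, hlt⟩ s a) s').toReal *
          (ratio * (rr + pexp (traj P π n (h + 1) s') (cumReward r (h + 1))))
          = ratio * ∑ s' : S, ((P ⟨h, hlt⟩ s a) s').toReal *
            (rr + pexp (traj P π n (h + 1) s') (cumReward r (h + 1))) := by
        rw [Finset.mul_sum]
        exact Finset.sum_congr rfl fun s' _ => by ring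
      rw [hpull, ← mul_assoc, hratio, mu_mul_ratio π μ habs]
    · rw [pexp_traj_stop P μ hlt, pexp_traj_stop P π hlt, cumReward_nil,
        mul_zero]

end ISProof


/-- Trajectory importance sampling is unbiased for off-policy evaluation:
if `μ` covers `π` (wherever `π` puts positive probability, so does `μ`), then
the expectation under `μ`'s trajectory distribution of the importance-weighted
return `W · G` equals `V^π_0(s)`. -/
theorem importance_sampling_unbiased {S A : Type} [Fintype S] [Nonempty S]
    [Fintype A] [Nonempty A] {H : ℕ} (P : Fin H → S → A → PMF S)
    (r : Fin H → S → A → ℝ) (π μ : Fin H → S → PMF A)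
    (habs : ∀ (t : Fin H) (s : S) (a : A), 0 < (π t s) a → 0 < (μ t s) a) :
    ∀ s : S,
      pexp (traj P μ H 0 s)
        (fun l => impWeight π μ l * cumReward r 0 l) = value P r π 0 s := by
  intro s
  have h0 : (fun l => impWeight π μ l * cumReward r 0 l)
      = fun l => wgt π μ 0 l * cumReward r 0 l := by
    funext l; rw [wgt_zero]
  rw [h0, is_unbiased_aux P r π μ habs H 0 s]
  rfl
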